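/- arXiv:1608.08592 — 3 statements merged into one kernel-verified Lean document; each statement's English description precedes it below -/
import Mathlib

section
/- Let q ≥ 1 and let S be a finite set of words over the alphabet Σ = {x_1, …, x_q} such that S^† is co-finite, and let n be the length of a longest word in S. Then every word over Σ of length strictly greater than (2q−1)n² − (5q−2)n + 3q − 2 belongs to S^†; equivalently, the length of a longest word not in S^† is at most (2q−1)n² − (5q−2)n + 3q − 2. -/
/-- `Shuffle u v w` means that the word `w` is an interleaving (shuffle) of the
words `u` and `v`. -/
inductive Shuffle {α : Type*} : List α → List α → List α → Prop
  | nil : Shuffle [] [] []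
  | left {a : α} {u v w : List α} : Shuffle u v w → Shuffle (a :: u) v (a :: w)
  | right {a : α} {u v w : List α} : Shuffle u v w → Shuffle u (a :: v) (a :: w)

/-- `IterShuffle S y` means `y` belongs to the iterated shuffle `S^†`, i.e. `y`
can be obtained by shuffling together finitely many (possibly zero) words of `S`. -/
inductive IterShuffle {α : Type*} (S : Set (List α)) : List α → Prop
  | nil : IterShuffle S []
  | step {u w y : List α} : u ∈ S → IterShuffle S w → Shuffle u w y → IterShuffle S y

/-!
Write `m = n - 1`. For a letter `c`, the lengths of the unary words of `S` generate an additive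
submonoid of `ℕ` containing every `k` with `c^k ∈ S^†`; co-finiteness makes it co-finite, and
since its generators are at most `n`, a pigeonhole argument on prefix sums shows that it contains
every `k ≥ m(m-1)`. Co-finiteness also forces `S` to contain words `c^i b` and `b c^j` with
`i, j ≤ m` for all letters `b ≠ c`.

Given a long word `y`, each letter occurring fewer than `m(m-1)` times has at most `m`
occurrences in excess of a representable count. Each excess occurrence of `b` is shuffled out
with one of the pair words for `b` and some letter `c` occurring at least `m(m-1) + m` times, at a
cost of at most `m` occurrences of `c`. Counting shows that the frequent letters can pay for all
the excess once `|y|` exceeds the bound, after which every letter count is a sum of lengths of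
unary words of `S`.
-/

open List

section NumericalSemigroup

variable {E : Set ℕ}

theorem exists_mem_ne_zero_sub_mem_closure {k : ℕ} (hk : k ∈ AddSubmonoid.closure E)
    (hk0 : k ≠ 0) : ∃ e ∈ E, e ≠ 0 ∧ e ≤ k ∧ k - e ∈ AddSubmonoid.closure E := by
  classical
  obtain ⟨l, hlE, rfl⟩ := AddSubmonoid.exists_list_of_mem_closure hk
  obtain ⟨e, hel, he0⟩ : ∃ e ∈ l, e ≠ 0 := by
    by_contra! h
    exact hk0 (List.sum_eq_zero h)
  have hsum := List.sum_erase hel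
  refine ⟨e, hlE e hel, he0, by omega, ?_⟩
  rw [← hsum, Nat.add_sub_cancel_left]
  exact AddSubmonoid.list_sum_mem _ fun x hx =>
    AddSubmonoid.subset_closure (hlE x (mem_of_mem_erase hx))

theorem exists_sublist_length_lt_sum_modEq_of_le_length {a : ℕ} (ha : 0 < a) {l : List ℕ}
    (hl : a ≤ l.length) :
    ∃ l', l' <+ l ∧ l'.length < l.length ∧ l'.sum ≡ l.sum [MOD a] := by
  obtain ⟨i, hi, j, hj, hij, hmod⟩ := Finset.exists_ne_map_eq_of_card_lt_of_maps_to
    (s := Finset.range (a + 1)) (t := Finset.range a) (f := fun i => (l.take i).sum % a)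
    (by simp) fun i _ => Finset.mem_range.2 (Nat.mod_lt _ ha)
  wlog hlt : i < j generalizing i j
  · exact this j hj i hi hij.symm hmod.symm (by omega)
  have hja : j ≤ a := Finset.mem_range_succ_iff.mp hj
  refine ⟨l.take i ++ l.drop j, ?_, ?_, ?_⟩
  · simpa only [take_append_drop] using
      (take_sublist_take_left (l := l) hlt.le).append_right (l.drop j)
  · simp only [length_append, length_take, length_drop]
    omega
  · rw [sum_append, ← sum_take_add_sum_drop l j]
    exact Nat.ModEq.add_right _ hmod

theorem exists_sublist_length_lt_sum_modEq {a : ℕ} (ha : 0 < a) (l : List ℕ) :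
    ∃ l', l' <+ l ∧ l'.length < a ∧ l'.sum ≡ l.sum [MOD a] := by
  induction hn : l.length using Nat.strong_induction_on generalizing l with
  | _ n ih =>
  by_cases hl : l.length < a
  · exact ⟨l, Sublist.refl l, hl, rfl⟩
  obtain ⟨l', hl', hlen, hmod⟩ :=
    exists_sublist_length_lt_sum_modEq_of_le_length ha (not_lt.mp hl)
  obtain ⟨l'', hl'', hlen', hmod'⟩ := ih _ (hn ▸ hlen) l' rfl
  exact ⟨l'', hl''.trans hl', hlen', hmod'.trans hmod⟩

theorem mem_closure_of_sub_one_mul_sub_one_le {a n M k : ℕ} (hE : ∀ e ∈ E, e ≤ n)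
    (ha : a ∈ E) (ha0 : 0 < a) (htail : ∀ k, M ≤ k → k ∈ AddSubmonoid.closure E)
    (hk : (a - 1) * (n - 1) ≤ k) : k ∈ AddSubmonoid.closure E := by
  obtain ⟨l, hlE, hl⟩ :=
    AddSubmonoid.exists_list_of_mem_closure (htail (k + a * M) (by nlinarith))
  obtain ⟨r, hrl, hrlen, hr⟩ := exists_sublist_length_lt_sum_modEq ha0 l
  have hrE : ∀ e ∈ r, e ∈ E := fun e he => hlE e (hrl.subset he)
  have hrk : r.sum ≡ k [MOD a] := by
    rw [hl] at hr
    exact hr.trans (by simp [Nat.ModEq])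
  have hrn : r.sum ≤ (a - 1) * n := by
    calc r.sum ≤ r.length * n := by
          simpa using sum_le_card_nsmul r n fun e he => hE e (hrE e he)
      _ ≤ (a - 1) * n := Nat.mul_le_mul_right n (by omega)
  have hrk' : r.sum ≤ k := by
    by_contra! h
    have hak : a ≤ r.sum - k :=
      Nat.le_of_dvd (by omega) ((Nat.modEq_iff_dvd' h.le).mp hrk.symm)
    obtain ⟨a', rfl⟩ : ∃ a', a = a' + 1 := ⟨a - 1, by omega⟩
    obtain ⟨n', rfl⟩ : ∃ n', n = n' + 1 := ⟨n - 1, by have := hE _ ha; omega⟩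
    simp only [Nat.add_sub_cancel] at hk hrn
    rw [mul_add_one] at hrn
    omega
  obtain ⟨d, hd⟩ := (Nat.modEq_iff_dvd' hrk').mp hrk
  rw [← Nat.add_sub_of_le hrk', hd, mul_comm, ← smul_eq_mul]
  exact add_mem (AddSubmonoid.list_sum_mem _ fun e he => AddSubmonoid.subset_closure (hrE e he))
    (nsmul_mem (AddSubmonoid.subset_closure ha) d)

theorem mem_closure_of_sub_one_mul_sub_two_le {n M k : ℕ} (hE : ∀ e ∈ E, e ≤ n)
    (htail : ∀ k, M ≤ k → k ∈ AddSubmonoid.closure E) (hk : (n - 1) * (n - 2) ≤ k) :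
    k ∈ AddSubmonoid.closure E := by
  by_cases h : ∃ a ∈ E, 0 < a ∧ a < n
  · obtain ⟨a, ha, ha0, han⟩ := h
    refine mem_closure_of_sub_one_mul_sub_one_le hE ha ha0 htail (le_trans ?_ hk)
    rw [mul_comm]
    exact Nat.mul_le_mul_left _ (by omega)
  push Not at h
  obtain ⟨e, he, he0, -⟩ :=
    exists_mem_ne_zero_sub_mem_closure (htail (M + 1) (by omega)) (by omega)
  -- every generator is `0` or `n`, so `e = n` divides the consecutive numbers `M` and `M + 1`
  have hdvd : ∀ x ∈ AddSubmonoid.closure E, e ∣ x := fun x hx => by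
    induction hx using AddSubmonoid.closure_induction with
    | mem x hx =>
      rcases Nat.eq_zero_or_pos x with rfl | hx0
      · exact dvd_zero e
      · rw [le_antisymm (hE x hx) (h x hx hx0), le_antisymm (hE e he) (h e he (by omega))]
    | zero => exact dvd_zero e
    | add x y _ _ hx hy => exact dvd_add hx hy
  have he1 : e = 1 := Nat.dvd_one.mp <| (Nat.dvd_add_right (hdvd M (htail M le_rfl))).mp
    (hdvd (M + 1) (htail (M + 1) (by omega)))
  exact mem_closure_of_sub_one_mul_sub_one_le hE he (by omega) htail (by simp [he1])

end NumericalSemigroup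

section Excess

open Classical in
noncomputable def excess (A : AddSubmonoid ℕ) (v : ℕ) : ℕ :=
  v - Nat.findGreatest (fun k => k ∈ A) v

variable {A : AddSubmonoid ℕ} {v : ℕ}

theorem excess_eq_zero_iff : excess A v = 0 ↔ v ∈ A := by
  classical
  unfold excess
  refine ⟨fun h => ?_, fun h => by rw [Nat.findGreatest_eq h, Nat.sub_self]⟩
  have hle := Nat.findGreatest_le (P := fun k => k ∈ A) v
  simpa [le_antisymm hle (Nat.sub_eq_zero_iff_le.mp h)] using
    Nat.findGreatest_spec (P := fun k => k ∈ A) (Nat.zero_le v) A.zero_mem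

theorem excess_lt {e : ℕ} (he : e ∈ A) (he0 : e ≠ 0) : excess A v < e := by
  classical
  unfold excess
  by_contra! h
  have hg := Nat.findGreatest_spec (P := fun k => k ∈ A) (Nat.zero_le v) A.zero_mem
  have := Nat.le_findGreatest (P := fun k => k ∈ A) (n := v) (by omega) (A.add_mem hg he)
  omega

theorem excess_eq_zero_of_le {N : ℕ} (hA : ∀ k, N ≤ k → k ∈ A) (h : N ≤ v) :
    excess A v = 0 :=
  excess_eq_zero_iff.mpr (hA v h)

theorem lt_of_excess_ne_zero {N : ℕ} (hA : ∀ k, N ≤ k → k ∈ A) (h : excess A v ≠ 0) :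
    v < N :=
  not_le.mp fun hv => h (excess_eq_zero_of_le hA hv)

theorem excess_sub_one_add_one (h : excess A v ≠ 0) : excess A (v - 1) + 1 = excess A v := by
  classical
  have hv : v ∉ A := mt excess_eq_zero_iff.mpr h
  obtain ⟨v, rfl⟩ : ∃ v', v = v' + 1 := ⟨v - 1, by rcases v with _ | v <;> simp_all⟩
  unfold excess at h ⊢
  rw [Nat.add_sub_cancel, Nat.findGreatest_of_not (P := fun k => k ∈ A) hv] at *
  have := Nat.findGreatest_le (P := fun k => k ∈ A) v
  omega

end Excess

section Counting

theorem div_le_div_add_one_of_le_add {a b m : ℕ} (h : a ≤ b + m) : a / m ≤ b / m + 1 := by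
  rcases Nat.eq_zero_or_pos m with rfl | hm
  · simp
  · calc a / m ≤ (b + m) / m := Nat.div_le_div_right h
      _ = b / m + 1 := Nat.add_div_right b hm

theorem mul_sub_one_add_self (m : ℕ) : m * (m - 1) + m = m ^ 2 := by
  cases m <;> simp [sq, Nat.mul_succ]

theorem add_one_le_mul_div_add_sq {m v : ℕ} (hm : 0 < m) (h : m * (m - 1) ≤ v) :
    v + 1 ≤ m * ((v - m * (m - 1)) / m) + m ^ 2 := by
  have := Nat.lt_mul_div_succ (v - m * (m - 1)) hm
  have := mul_sub_one_add_self m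
  rw [mul_add_one] at *
  omega

theorem add_mul_excess_add_le {A : AddSubmonoid ℕ} {m v : ℕ} (hm : 0 < m)
    (hA : ∀ k, m * (m - 1) ≤ k → k ∈ A) (hex : excess A v ≤ m) :
    v + m * excess A v + m + 1 ≤ m * ((v - m * (m - 1)) / m) + 2 * m ^ 2 := by
  have hsq := mul_sub_one_add_self m
  rcases lt_or_ge v (m * (m - 1)) with h | h
  · have := Nat.mul_le_mul_left m hex
    rw [← sq] at this
    omega
  · rw [excess_eq_zero_of_le hA h, mul_zero, add_zero]
    have := add_one_le_mul_div_add_sq hm h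
    have : m ≤ m ^ 2 := Nat.le_self_pow two_ne_zero m
    omega

variable {α : Type*} [Fintype α]

theorem sum_le_sum_of_add_mul_le {m : ℕ} {v t σ : α → ℕ} (c₀ : α)
    (hv : 2 * Fintype.card α * m ^ 2 ≤ m ^ 2 + Fintype.card α * m + ∑ c, v c)
    (hle : ∀ c, v c + m * t c + m + 1 ≤ m * σ c + 2 * m ^ 2)
    (hc₀ : v c₀ + m * t c₀ + 1 ≤ m * σ c₀ + m ^ 2) :
    ∑ c, t c ≤ ∑ c, σ c := by
  classical
  have hsum : ∑ c, (v c + m * t c + m + 1) + m ^ 2 ≤ ∑ c, (m * σ c + 2 * m ^ 2) + m := by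
    rw [← Finset.add_sum_erase _ _ (Finset.mem_univ c₀),
      ← Finset.add_sum_erase _ _ (Finset.mem_univ c₀)]
    have := Finset.sum_le_sum fun c (_ : c ∈ Finset.univ.erase c₀) => hle c
    omega
  simp only [Finset.sum_add_distrib, ← Finset.mul_sum, Finset.sum_const, Finset.card_univ,
    smul_eq_mul] at hsum
  have hq : 0 < Fintype.card α := Fintype.card_pos_iff.mpr ⟨c₀⟩
  have : m * ∑ c, t c < m * (∑ c, σ c + 1) := by nlinarith
  exact Nat.lt_succ_iff.mp (Nat.lt_of_mul_lt_mul_left this)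

theorem sum_excess_le_sum_credit [Nonempty α] {A : α → AddSubmonoid ℕ} {m : ℕ}
    {v : α → ℕ} (hA : ∀ c k, m * (m - 1) ≤ k → k ∈ A c)
    (hex : ∀ c, excess (A c) (v c) ≤ m)
    (hv : 2 * Fintype.card α * m ^ 2 ≤ m ^ 2 + Fintype.card α * m + ∑ c, v c) :
    ∑ c, excess (A c) (v c) ≤ ∑ c, (v c - m * (m - 1)) / m := by
  rcases Nat.eq_zero_or_pos m with rfl | hm
  · simp [fun c => Nat.le_zero.mp (hex c)]
  obtain ⟨c₀, -, hc₀⟩ : ∃ c₀ ∈ Finset.univ, m * (m - 1) ≤ v c₀ := by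
    refine Finset.exists_le_of_sum_le Finset.univ_nonempty ?_
    have := mul_sub_one_add_self m
    have : 0 < Fintype.card α := Fintype.card_pos
    simp only [Finset.sum_const, Finset.card_univ, smul_eq_mul]
    nlinarith
  refine sum_le_sum_of_add_mul_le c₀ hv (fun c => add_mul_excess_add_le hm (hA c) (hex c)) ?_
  rw [excess_eq_zero_of_le (hA c₀) hc₀, mul_zero, add_zero]
  exact add_one_le_mul_div_add_sq hm hc₀

end Counting

section Words

variable {α : Type*}

namespace Shuffle

variable {u v w : List α}

theorem perm (h : Shuffle u v w) : w ~ u ++ v := by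
  induction h with
  | nil => exact Perm.refl _
  | left _ ih => exact ih.cons _
  | right _ ih => exact (ih.cons _).trans perm_middle.symm

theorem length_eq (h : Shuffle u v w) : w.length = u.length + v.length := by
  rw [h.perm.length_eq, length_append]

theorem count_eq [DecidableEq α] (h : Shuffle u v w) (x : α) :
    count x w = count x u + count x v := by
  rw [h.perm.count_eq, count_append]

theorem sublist_left (h : Shuffle u v w) : u <+ w := by
  induction h with
  | nil => exact Sublist.refl _
  | left _ ih => exact ih.cons_cons _
  | right _ ih => exact ih.cons _

theorem sublist_right (h : Shuffle u v w) : v <+ w := by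
  induction h with
  | nil => exact Sublist.refl _
  | left _ ih => exact ih.cons _
  | right _ ih => exact ih.cons_cons _

theorem exists_of_sublist {u y : List α} (h : u <+ y) : ∃ w, Shuffle u w y := by
  induction h with
  | slnil => exact ⟨[], .nil⟩
  | cons a _ ih => obtain ⟨w, hw⟩ := ih; exact ⟨a :: w, hw.right⟩
  | cons_cons a _ ih => obtain ⟨w, hw⟩ := ih; exact ⟨w, hw.left⟩

end Shuffle

def unaryLengths (S : Set (List α)) (c : α) : AddSubmonoid ℕ :=
  AddSubmonoid.closure {e | replicate e c ∈ S}

namespace IterShuffle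

variable {S : Set (List α)} {y : List α}

theorem exists_mem_sublist_of_mem (h : IterShuffle S y) {x : α} (hx : x ∈ y) :
    ∃ u ∈ S, u <+ y ∧ x ∈ u := by
  induction h with
  | nil => simp at hx
  | step hu _ hsh ih =>
    rcases mem_append.mp (hsh.perm.subset hx) with hxu | hxw
    · exact ⟨_, hu, hsh.sublist_left, hxu⟩
    · obtain ⟨u', hu', hsub, hxu'⟩ := ih hxw
      exact ⟨u', hu', hsub.trans hsh.sublist_right, hxu'⟩

theorem length_mem_unaryLengths (h : IterShuffle S y) {c : α} (hy : ∀ x ∈ y, x = c) :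
    y.length ∈ unaryLengths S c := by
  induction h with
  | nil => exact zero_mem _
  | @step u w y hu _ hsh ih =>
    rw [hsh.length_eq]
    refine add_mem (AddSubmonoid.subset_closure ?_)
      (ih fun x hx => hy x (hsh.sublist_right.subset hx))
    show replicate u.length c ∈ S
    rwa [← eq_replicate_length.mpr fun x hx => hy x (hsh.sublist_left.subset hx)]

end IterShuffle

theorem iterShuffle_of_forall_count_mem [DecidableEq α] {S : Set (List α)} (y : List α)
    (h : ∀ c, count c y ∈ unaryLengths S c) : IterShuffle S y := by
  induction hn : y.length using Nat.strong_induction_on generalizing y with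
  | _ n ih =>
  cases y with
  | nil => exact .nil
  | cons a l =>
    obtain ⟨e, he, he0, hle, hsub⟩ := exists_mem_ne_zero_sub_mem_closure (h a) (by simp)
    obtain ⟨w, hw⟩ := Shuffle.exists_of_sublist (replicate_sublist_iff.mpr hle)
    refine .step he (ih w.length ?_ w (fun c => ?_) rfl) hw
    · have := hw.length_eq
      simp only [length_replicate] at this
      omega
    · have := hw.count_eq c
      rcases eq_or_ne c a with rfl | hca
      · rw [count_replicate_self] at this
        rwa [show count c w = count c (c :: l) - e by omega]
      · rw [count_replicate, if_neg (by simpa using hca.symm), zero_add] at this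
        exact this ▸ h c

section LongWords

variable {S : Set (List α)} {B : ℕ}

theorem mem_unaryLengths_of_lt (hlong : ∀ z : List α, B < z.length → IterShuffle S z) {c : α}
    {k : ℕ} (hk : B < k) : k ∈ unaryLengths S c := by
  simpa using (hlong (replicate k c) (by simpa)).length_mem_unaryLengths
    fun x hx => eq_of_mem_replicate hx

theorem exists_replicate_append_singleton_mem
    (hlong : ∀ z : List α, B < z.length → IterShuffle S z) {b c : α} (hbc : b ≠ c) :
    ∃ i, replicate i c ++ [b] ∈ S := by
  obtain ⟨u, hu, hsub, hb⟩ :=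
    (hlong (replicate (B + 1) c ++ [b]) (by simp)).exists_mem_sublist_of_mem (x := b) (by simp)
  obtain ⟨u₁, u₂, rfl, h₁, h₂⟩ := sublist_append_iff.mp hsub
  obtain ⟨i, -, rfl⟩ := sublist_replicate_iff.mp h₁
  rcases sublist_singleton.mp h₂ with rfl | rfl
  · simp [mem_replicate, hbc] at hb
  · exact ⟨i, hu⟩

theorem exists_cons_replicate_mem
    (hlong : ∀ z : List α, B < z.length → IterShuffle S z) {b c : α} (hbc : b ≠ c) :
    ∃ j, b :: replicate j c ∈ S := by
  obtain ⟨u, hu, hsub, hb⟩ := (hlong (b :: replicate B c) (by simp)).exists_mem_sublist_of_mem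
    mem_cons_self
  rcases sublist_cons_iff.mp hsub with h | ⟨r, rfl, hr⟩
  · obtain ⟨j, -, rfl⟩ := sublist_replicate_iff.mp h
    simp [mem_replicate, hbc] at hb
  · obtain ⟨j, -, rfl⟩ := sublist_replicate_iff.mp hr
    exact ⟨j, hu⟩

variable {m : ℕ}

theorem exists_pair_words (hlong : ∀ z : List α, B < z.length → IterShuffle S z)
    (hmax : ∀ w ∈ S, w.length ≤ m + 1) {b c : α} (hbc : b ≠ c) :
    ∃ i ≤ m, ∃ j ≤ m, replicate i c ++ [b] ∈ S ∧ b :: replicate j c ∈ S := by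
  obtain ⟨i, hi⟩ := exists_replicate_append_singleton_mem hlong hbc
  obtain ⟨j, hj⟩ := exists_cons_replicate_mem hlong hbc
  exact ⟨i, by simpa using hmax _ hi, j, by simpa using hmax _ hj, hi, hj⟩

theorem mem_unaryLengths_of_mul_sub_one_le
    (hlong : ∀ z : List α, B < z.length → IterShuffle S z)
    (hmax : ∀ w ∈ S, w.length ≤ m + 1) (c : α) {k : ℕ} (hk : m * (m - 1) ≤ k) :
    k ∈ unaryLengths S c :=
  mem_closure_of_sub_one_mul_sub_two_le (n := m + 1) (fun e he => by simpa using hmax _ he)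
    (fun _ => mem_unaryLengths_of_lt hlong) (by rwa [show m + 1 - 2 = m - 1 by omega,
      Nat.add_sub_cancel])

theorem excess_unaryLengths_le (hlong : ∀ z : List α, B < z.length → IterShuffle S z)
    (hmax : ∀ w ∈ S, w.length ≤ m + 1) (c : α) (v : ℕ) :
    excess (unaryLengths S c) v ≤ m := by
  obtain ⟨e, he, he0, -⟩ :=
    exists_mem_ne_zero_sub_mem_closure (mem_unaryLengths_of_lt hlong (c := c) B.lt_succ_self)
      B.succ_ne_zero
  have := excess_lt (A := unaryLengths S c) (v := v) (AddSubmonoid.subset_closure he) he0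
  have := hmax _ he
  simp only [length_replicate] at this
  omega

end LongWords

end Words

section Absorption

variable {α : Type*} [DecidableEq α]

theorem replicate_append_singleton_sublist_or_cons_replicate_sublist {b c : α} (hbc : b ≠ c)
    {i j : ℕ} {y : List α} (hb : b ∈ y) (hij : i + j ≤ count c y + 1) :
    replicate i c ++ [b] <+ y ∨ b :: replicate j c <+ y := by
  obtain ⟨y₁, y₂, rfl⟩ := append_of_mem hb
  rw [count_append, count_cons_of_ne hbc] at hij
  by_cases hi : i ≤ count c y₁
  · exact .inl ((replicate_sublist_iff.mpr hi).append (singleton_sublist.mpr mem_cons_self))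
  · exact .inr (((replicate_sublist_iff.mpr (by omega)).cons_cons b).trans
      (sublist_append_right y₁ _))

theorem exists_mem_sublist_perm_cons_replicate {S : Set (List α)} {m : ℕ} {b c : α}
    (hbc : b ≠ c)
    (hpair : ∃ i ≤ m, ∃ j ≤ m, replicate i c ++ [b] ∈ S ∧ b :: replicate j c ∈ S)
    {y : List α} (hb : b ∈ y) (hc : 2 * m ≤ count c y + 1) :
    ∃ u ∈ S, u <+ y ∧ ∃ k ≤ m, u ~ b :: replicate k c := by
  obtain ⟨i, hi, j, hj, hiS, hjS⟩ := hpair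
  rcases replicate_append_singleton_sublist_or_cons_replicate_sublist (i := i) (j := j) hbc hb
    (by omega) with h | h
  · exact ⟨_, hiS, h, i, hi, perm_append_singleton b _⟩
  · exact ⟨_, hjS, h, j, hj, Perm.refl _⟩

theorem count_cons_replicate {b c : α} (hbc : b ≠ c) (k : ℕ) (x : α) :
    count x (b :: replicate k c) = (if x = b then 1 else 0) + (if x = c then k else 0) := by
  rw [count_cons, count_replicate]
  grind

variable [Fintype α]

noncomputable def totalExcess (S : Set (List α)) (y : List α) : ℕ :=
  ∑ c, excess (unaryLengths S c) (count c y)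

-- letter `c` pays for `(count c y - N) / m` moves, each removing at most `m` of its occurrences,
-- while keeping at least `N` of them
def totalCredit (N m : ℕ) (y : List α) : ℕ :=
  ∑ c, (count c y - N) / m

variable {S : Set (List α)} {m N : ℕ}

theorem totalExcess_lt_of_count_eq (hN : ∀ c k, N ≤ k → k ∈ unaryLengths S c) {b c : α}
    (hbc : b ≠ c) {k : ℕ} {y w : List α} (hb : excess (unaryLengths S b) (count b y) ≠ 0)
    (hcw : N ≤ count c w)
    (hcount : ∀ x, count x y = (if x = b then 1 else 0) + (if x = c then k else 0) + count x w) :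
    totalExcess S w < totalExcess S y := by
  have hle (x : α) : excess (unaryLengths S x) (count x w) + (if x = b then 1 else 0) ≤
      excess (unaryLengths S x) (count x y) := by
    have := hcount x
    rcases eq_or_ne x b with rfl | hxb
    · rw [if_pos rfl, if_neg hbc] at this
      rw [if_pos rfl, show count x w = count x y - 1 by omega, excess_sub_one_add_one hb]
    rcases eq_or_ne x c with rfl | hxc
    · rw [if_neg hxb, excess_eq_zero_of_le (hN x) hcw]
      exact Nat.zero_le _
    · simp only [if_neg hxb, if_neg hxc, zero_add, add_zero] at this ⊢
      rw [this]
  have := Finset.sum_le_sum fun x (_ : x ∈ Finset.univ) => hle x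
  rw [Finset.sum_add_distrib, Fintype.sum_ite_eq'] at this
  exact this

theorem totalCredit_le_add_one_of_count_eq {b c : α} (hbc : b ≠ c) {k : ℕ} (hk : k ≤ m)
    {y w : List α} (hbN : count b y < N)
    (hcount : ∀ x, count x y = (if x = b then 1 else 0) + (if x = c then k else 0) + count x w) :
    totalCredit N m y ≤ totalCredit N m w + 1 := by
  have hle (x : α) :
      (count x y - N) / m ≤ (count x w - N) / m + (if x = c then 1 else 0) := by
    have := hcount x
    rcases eq_or_ne x c with rfl | hxc
    · rw [if_neg hbc.symm, if_pos rfl] at this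
      rw [if_pos rfl]
      exact div_le_div_add_one_of_le_add (by omega)
    rcases eq_or_ne x b with rfl | hxb
    · simp [Nat.sub_eq_zero_of_le hbN.le]
    · simp only [if_neg hxb, if_neg hxc, zero_add, add_zero] at this ⊢
      rw [this]
  have := Finset.sum_le_sum fun x (_ : x ∈ Finset.univ) => hle x
  rw [Finset.sum_add_distrib, Fintype.sum_ite_eq'] at this
  exact this

theorem exists_shuffle_totalExcess_lt (hN : ∀ c k, N ≤ k → k ∈ unaryLengths S c)
    (hpair : ∀ b c : α, b ≠ c →
      ∃ i ≤ m, ∃ j ≤ m, replicate i c ++ [b] ∈ S ∧ b :: replicate j c ∈ S)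
    (hmN : m ≤ N + 1) {y : List α} (hy : totalExcess S y ≤ totalCredit N m y)
    (h0 : totalExcess S y ≠ 0) :
    ∃ u ∈ S, ∃ w, Shuffle u w y ∧ totalExcess S w < totalExcess S y ∧
      totalExcess S w ≤ totalCredit N m w := by
  obtain ⟨b, -, hb⟩ := Finset.exists_ne_zero_of_sum_ne_zero h0
  obtain ⟨c, -, hc⟩ : ∃ c ∈ Finset.univ, (count c y - N) / m ≠ 0 :=
    Finset.exists_ne_zero_of_sum_ne_zero (by unfold totalCredit at hy; omega)
  have hbN : count b y < N := lt_of_excess_ne_zero (hN b) hb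
  have hb0 : count b y ≠ 0 := fun h => hb (excess_eq_zero_iff.mpr (h ▸ zero_mem _))
  obtain ⟨hm0, hcN⟩ := Nat.div_ne_zero_iff.mp hc
  have hbc : b ≠ c := by rintro rfl; omega
  obtain ⟨u, hu, huy, k, hk, hperm⟩ := exists_mem_sublist_perm_cons_replicate (y := y) hbc
    (hpair b c hbc) (count_pos_iff.mp (by omega)) (by omega)
  obtain ⟨w, hw⟩ := Shuffle.exists_of_sublist huy
  have hcount (x : α) :
      count x y = (if x = b then 1 else 0) + (if x = c then k else 0) + count x w := by
    rw [← count_cons_replicate hbc, ← hperm.count_eq]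
    exact hw.count_eq x
  have hcw : N ≤ count c w := by
    have := hcount c
    rw [if_neg hbc.symm, if_pos rfl] at this
    omega
  have hlt := totalExcess_lt_of_count_eq hN hbc hb hcw hcount
  have hcredit := totalCredit_le_add_one_of_count_eq hbc hk hbN hcount
  exact ⟨u, hu, w, hw, hlt, by omega⟩

theorem iterShuffle_of_totalExcess_le (hN : ∀ c k, N ≤ k → k ∈ unaryLengths S c)
    (hpair : ∀ b c : α, b ≠ c →
      ∃ i ≤ m, ∃ j ≤ m, replicate i c ++ [b] ∈ S ∧ b :: replicate j c ∈ S)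
    (hmN : m ≤ N + 1) (y : List α) (hy : totalExcess S y ≤ totalCredit N m y) :
    IterShuffle S y := by
  induction hD : totalExcess S y using Nat.strong_induction_on generalizing y with
  | _ D ih =>
  by_cases h0 : totalExcess S y = 0
  · refine iterShuffle_of_forall_count_mem y fun c => excess_eq_zero_iff.mp ?_
    exact Finset.sum_eq_zero_iff.mp h0 c (Finset.mem_univ c)
  · obtain ⟨u, hu, w, hw, hlt, hw'⟩ := exists_shuffle_totalExcess_lt hN hpair hmN hy h0
    exact .step hu (ih _ (hD ▸ hlt) w hw' rfl) hw

end Absorption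

theorem sum_count_eq_length {α : Type*} [Fintype α] [DecidableEq α] (y : List α) :
    ∑ c, count c y = y.length := by
  simpa using Multiset.sum_count_eq_card (s := Finset.univ) (m := (y : Multiset α)) (by simp)

theorem longest_missing_le_general (q : ℕ) (hq : 1 ≤ q)
    (S : Set (List (Fin q)))
    (hcof : {w : List (Fin q) | ¬ IterShuffle S w}.Finite)
    (n : ℕ) (hmax : ∀ w ∈ S, w.length ≤ n) :
    ∀ y : List (Fin q),
      (2 * (q : ℤ) - 1) * (n : ℤ) ^ 2 - (5 * (q : ℤ) - 2) * (n : ℤ) + 3 * (q : ℤ) - 2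
        < (y.length : ℤ) →
      IterShuffle S y := by
  intro y hy
  obtain ⟨B, hB⟩ := (hcof.image List.length).bddAbove
  have hlong (z : List (Fin q)) (hz : B < z.length) : IterShuffle S z :=
    by_contra fun h => hz.not_ge (hB ⟨z, h, rfl⟩)
  have hmax' : ∀ w ∈ S, w.length ≤ n - 1 + 1 := fun w hw => (hmax w hw).trans (by omega)
  have : Nonempty (Fin q) := ⟨⟨0, hq⟩⟩
  refine iterShuffle_of_totalExcess_le (mem_unaryLengths_of_mul_sub_one_le hlong hmax')
    (fun b c => exists_pair_words hlong hmax') ?_ y ?_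
  · rcases n - 1 with _ | m
    · simp
    · simp only [Nat.add_sub_cancel]
      nlinarith
  refine sum_excess_le_sum_credit (mem_unaryLengths_of_mul_sub_one_le hlong hmax')
    (fun c => excess_unaryLengths_le hlong hmax' c _) ?_
  -- with `m = n - 1`, the hypothesis on `y` reads `2 q m² ≤ m² + q m + |y|`
  rw [sum_count_eq_length, Fintype.card_fin]
  rcases Nat.eq_zero_or_pos n with rfl | hn
  · simp
  zify [hn]
  linear_combination Int.add_one_le_of_lt hy

/-- **Corollary.** Let `q ≥ 1` and let `S` be a finite set of words over a
`q`-letter alphabet such that `S^†` is co-finite, and let `n` be the length of a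
longest word in `S`.  Then every word of length strictly greater than
`(2q-1)n² - (5q-2)n + 3q - 2` belongs to `S^†` (equivalently, the length of a
longest word not in `S^†` is at most that quantity). -/
theorem longest_missing_le (q : ℕ) (hq : 1 ≤ q)
    (S : Set (List (Fin q))) (hS : S.Finite)
    (hcof : {w : List (Fin q) | ¬ IterShuffle S w}.Finite)
    (n : ℕ) (hmem : ∃ w ∈ S, w.length = n) (hmax : ∀ w ∈ S, w.length ≤ n) :
    ∀ y : List (Fin q),
      (2 * (q : ℤ) - 1) * (n : ℤ) ^ 2 - (5 * (q : ℤ) - 2) * (n : ℤ) + 3 * (q : ℤ) - 2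
        < (y.length : ℤ) →
      IterShuffle S y :=
  longest_missing_le_general q hq S hcof n hmax
end

section
/- Let q ≥ 1 and let S be a finite set of words over the alphabet Σ = {x_1, …, x_q} such that S^† is co-finite. Then |S| ≥ q. -/
namespace Shuffle

variable {α : Type*} {u v w : List α}

theorem subset_left (h : Shuffle u v w) : u ⊆ w := by
  induction h with
  | nil => exact List.Subset.refl _
  | left _ ih => exact List.cons_subset_cons _ ih
  | right _ ih => exact List.subset_cons_of_subset _ ih

theorem eq_of_nil_left (h : Shuffle [] v w) : v = w := by
  generalize hu : ([] : List α) = u at h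
  induction h with
  | nil => rfl
  | left _ _ => cases hu
  | right _ ih => rw [ih hu]

end Shuffle

namespace IterShuffle

variable {α : Type*} {S : Set (List α)}

theorem exists_mem_ne_nil_subset {y : List α} (h : IterShuffle S y) (hy : y ≠ []) :
    ∃ u ∈ S, u ≠ [] ∧ u ⊆ y := by
  induction h with
  | nil => exact absurd rfl hy
  | @step u w y hu _ hsh ih =>
    rcases eq_or_ne u [] with rfl | hu_ne
    · exact hsh.eq_of_nil_left ▸ ih (hsh.eq_of_nil_left ▸ hy)
    · exact ⟨u, hu, hu_ne, hsh.subset_left⟩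

theorem exists_replicate_of_finite_compl
    (hcof : {w : List α | ¬ IterShuffle S w}.Finite) (a : α) :
    ∃ n, 0 < n ∧ IterShuffle S (List.replicate n a) := by
  have hfin : {n | ¬ IterShuffle S (List.replicate n a)}.Finite :=
    hcof.preimage (List.replicate_left_injective a).injOn
  obtain ⟨n, hn, hpos⟩ := hfin.infinite_compl.exists_gt 0
  exact ⟨n, hpos, not_not.mp hn⟩

theorem exists_mem_ne_nil_forall_eq_of_finite_compl
    (hcof : {w : List α | ¬ IterShuffle S w}.Finite) (a : α) :
    ∃ u ∈ S, u ≠ [] ∧ ∀ c ∈ u, c = a := by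
  obtain ⟨n, hn, hrep⟩ := exists_replicate_of_finite_compl hcof a
  obtain ⟨u, hu, hu_ne, hsub⟩ :=
    hrep.exists_mem_ne_nil_subset (List.ne_nil_of_length_pos (by simpa using hn))
  exact ⟨u, hu, hu_ne, fun c hc => List.eq_of_mem_replicate (hsub hc)⟩

end IterShuffle

theorem card_ge_q_general (q : ℕ)
    (S : Set (List (Fin q))) (hS : S.Finite)
    (hcof : {w : List (Fin q) | ¬ IterShuffle S w}.Finite) :
    q ≤ S.ncard := by
  choose f hfS hf_ne hf_eq using IterShuffle.exists_mem_ne_nil_forall_eq_of_finite_compl hcof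
  have hf_inj : Function.Injective f := fun a b hab => by
    obtain ⟨c, hc⟩ := List.exists_mem_of_ne_nil _ (hf_ne a)
    exact (hf_eq a c hc).symm.trans (hf_eq b c (hab ▸ hc))
  calc q = (Set.univ : Set (Fin q)).ncard := by simp
    _ ≤ S.ncard := Set.ncard_le_ncard_of_injOn f (fun a _ => hfS a) hf_inj.injOn hS

/-- If `q ≥ 1` and `S` is a finite set of words over a `q`-letter alphabet such
that `S^†` is co-finite, then `|S| ≥ q`. -/
theorem card_ge_q (q : ℕ) (hq : 1 ≤ q)
    (S : Set (List (Fin q))) (hS : S.Finite)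
    (hcof : {w : List (Fin q) | ¬ IterShuffle S w}.Finite) :
    q ≤ S.ncard :=
  card_ge_q_general q S hS hcof
end

section
/- Let q ≥ 1, m ≥ 3, Σ = {x_1, …, x_q}, and let S = ⋃_{i=1}^q {x_i^m, x_i^{m+1}} ∪ ⋃_{i ≠ j} {x_i x_j^{m−1}, x_j^{m−1} x_i}. Then every word y over Σ whose length is a multiple of m and is at least (q−1)m² − 2qm + 3m can be written as y ∈ w ⧢ z, where w is a word in S^† and z is a word of length exactly (q−1)m² − 2qm + 3m. -/
/-! If `|y| ≥ n + m` and `q (m - 1) < n + m`, then by pigeonhole some letter `x` occurs `m` times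
in `y`, so `y ∈ x^m ⧢ y'` with `|y'| = |y| - m`. Since `x^m ∈ S`, splitting off such blocks one
at a time, and regrouping the shuffles by associativity, brings the length of the remainder down
to exactly `n`. For the theorem, `n = (q - 1) m² - 2 q m + 3 m = m ((q - 1) (m - 2) + 1)`. -/

namespace Shuffle

variable {α : Type*}

theorem nil_left : ∀ v : List α, Shuffle [] v v
  | [] => nil
  | _ :: v => right (nil_left v)

theorem length_add_length {u v w : List α} (h : Shuffle u v w) :
    u.length + v.length = w.length := by
  induction h with
  | nil => rfl
  | left _ ih => simp only [List.length_cons, ← ih]; omega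
  | right _ ih => simp only [List.length_cons, ← ih]; omega

theorem exists_assoc {u s t : List α} (h : Shuffle u s t) {v w : List α}
    (hs : Shuffle v w s) : ∃ r, Shuffle u v r ∧ Shuffle r w t := by
  induction h generalizing v w with
  | nil => cases hs; exact ⟨[], nil, nil⟩
  | left _ ih =>
    obtain ⟨r, hr, hrt⟩ := ih hs
    exact ⟨_, left hr, left hrt⟩
  | right _ ih =>
    cases hs with
    | left hs =>
      obtain ⟨r, hr, hrt⟩ := ih hs
      exact ⟨_, right hr, left hrt⟩
    | right hs =>
      obtain ⟨r, hr, hrt⟩ := ih hs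
      exact ⟨r, hr, right hrt⟩

end Shuffle

theorem List.Sublist.exists_shuffle {α : Type*} {u y : List α} (h : u.Sublist y) :
    ∃ v, Shuffle u v y := by
  induction h with
  | slnil => exact ⟨[], Shuffle.nil⟩
  | cons _ _ ih =>
    obtain ⟨v, hv⟩ := ih
    exact ⟨_, Shuffle.right hv⟩
  | cons_cons _ _ ih =>
    obtain ⟨v, hv⟩ := ih
    exact ⟨v, Shuffle.left hv⟩

theorem List.exists_replicate_sublist_of_mul_lt_length {α : Type*} [Fintype α] [DecidableEq α]
    {m : ℕ} {y : List α} (h : Fintype.card α * (m - 1) < y.length) :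
    ∃ x, (replicate m x).Sublist y := by
  have hsum : ∑ _x : α, (m - 1) < ∑ x : α, y.count x := by
    have := Multiset.sum_count_eq_card (s := Finset.univ) (m := (y : Multiset α)) (by simp)
    simp only [Multiset.coe_count, Multiset.coe_card] at this
    simpa [this] using h
  obtain ⟨x, -, hx⟩ := Finset.exists_lt_of_sum_lt hsum
  exact ⟨x, replicate_sublist_iff.mpr (by omega)⟩

theorem exists_iterShuffle_shuffle_of_length_eq_add_mul {α : Type*} [Fintype α]
    {S : Set (List α)} {m n : ℕ} (hS : ∀ x, List.replicate m x ∈ S)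
    (hn : Fintype.card α * (m - 1) < n + m) :
    ∀ (k : ℕ) (y : List α), y.length = n + m * k →
      ∃ w z, IterShuffle S w ∧ z.length = n ∧ Shuffle w z y := by
  classical
  intro k
  induction k with
  | zero => exact fun y hy => ⟨[], y, IterShuffle.nil, hy, Shuffle.nil_left y⟩
  | succ k ih =>
    intro y hy
    obtain ⟨x, hx⟩ := List.exists_replicate_sublist_of_mul_lt_length
      (show Fintype.card α * (m - 1) < y.length by rw [hy, Nat.mul_succ]; omega)
    obtain ⟨y', hy'⟩ := hx.exists_shuffle
    have hy'_length : y'.length = n + m * k := by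
      have := hy'.length_add_length
      rw [List.length_replicate, hy, Nat.mul_succ] at this
      omega
    obtain ⟨w, z, hw, hz, hwz⟩ := ih y' hy'_length
    obtain ⟨r, hr, hrz⟩ := hy'.exists_assoc hwz
    exact ⟨r, z, IterShuffle.step (hS x) hw hr, hz, hrz⟩

/-- For `q ≥ 1`, `m ≥ 3` and the prototypical set `S`, every word `y` whose
length is a multiple of `m` and at least `(q-1)m² - 2qm + 3m` can be written as
a shuffle of a word `w ∈ S^†` with a word `z` of length exactly
`(q-1)m² - 2qm + 3m`. -/
theorem split_off_iterShuffle (q m : ℕ) (hq : 1 ≤ q) (hm : 3 ≤ m)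
    (S : Set (List (Fin q)))
    (hS : S = {w | ∃ i : Fin q, w = List.replicate m i ∨ w = List.replicate (m + 1) i} ∪
              {w | ∃ i j : Fin q, i ≠ j ∧
                (w = i :: List.replicate (m - 1) j ∨
                 w = List.replicate (m - 1) j ++ [i])}) :
    ∀ y : List (Fin q), m ∣ y.length →
      ((q : ℤ) - 1) * m ^ 2 - 2 * q * m + 3 * m ≤ (y.length : ℤ) →
      ∃ w z : List (Fin q), IterShuffle S w ∧
        ((z.length : ℤ) = ((q : ℤ) - 1) * m ^ 2 - 2 * q * m + 3 * m) ∧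
        Shuffle w z y := by
  intro y hdvd hlength
  obtain ⟨q, rfl⟩ : ∃ q', q = q' + 1 := ⟨q - 1, by omega⟩
  obtain ⟨m, rfl⟩ : ∃ m', m = m' + 3 := ⟨m - 3, by omega⟩
  set n := (m + 3) * (q * (m + 1) + 1) with hn
  have hn_cast : (n : ℤ) = ((q + 1 : ℕ) - 1) * (m + 3 : ℕ) ^ 2 - 2 * (q + 1 : ℕ) * (m + 3 : ℕ)
      + 3 * (m + 3 : ℕ) := by
    rw [hn]; push_cast; ring
  have hn_le : n ≤ y.length := by rw [← Int.ofNat_le, hn_cast]; exact hlength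
  have hpigeon : Fintype.card (Fin (q + 1)) * (m + 3 - 1) < n + (m + 3) := by
    rw [Fintype.card_fin, hn, show m + 3 - 1 = m + 2 by omega]; nlinarith
  have hreplicate : ∀ x, List.replicate (m + 3) x ∈ S := fun x => by
    rw [hS]; exact Or.inl ⟨x, Or.inl rfl⟩
  obtain ⟨k, hk⟩ : ∃ k, y.length = n + (m + 3) * k :=
    (Nat.dvd_sub hdvd (Dvd.intro _ hn.symm)).imp fun k hk => by omega
  obtain ⟨w, z, hw, hz, hwz⟩ :=
    exists_iterShuffle_shuffle_of_length_eq_add_mul hreplicate hpigeon k y hk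
  exact ⟨w, z, hw, by rw [hz, hn_cast], hwz⟩
end
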